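/- arXiv:math/0312492 — 2 statements merged into one kernel-verified Lean document; each statement's English description precedes it below -/
import Mathlib

section
/- Let h, d, n be positive integers with h ≡ 0 (mod 10), let Ω : {1,2,…} → {0,1} be a sequence, and let k ≥ 1 satisfy Ω(k) = 1. If a group G satisfies the identity w_{Ω,k} ≡ 1, then the quasiidentity x^{q_k} = 1 → [x,y] = 1 holds in G; that is, every element x ∈ G with x^{q_k} = 1 commutes with every element of G. -/
open scoped commutatorElement

/-- `qSeq k = (p₁ p₂ ⋯ p_k)^k` where `pᵢ` is the `i`-th prime. -/
noncomputable def qSeq (k : ℕ) : ℕ := (∏ i ∈ Finset.range k, Nat.nth Nat.Prime i) ^ k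

/-- The signs `ε_j`: `+1` for `j ≡ 1,2,3,5,6 (mod 10)` and `-1` for `j ≡ 4,7,8,9,0 (mod 10)`. -/
def epsSign (j : ℕ) : ℤ :=
  if j % 10 = 1 ∨ j % 10 = 2 ∨ j % 10 = 3 ∨ j % 10 = 5 ∨ j % 10 = 6 then 1 else -1

/-- `v_k(x,y) = [[x^d, y^d]^d, x^(d·q_k)]`. -/
noncomputable def vWord (d k : ℕ) {G : Type*} [Group G] (x y : G) : G :=
  ⁅⁅x ^ d, y ^ d⁆ ^ d, x ^ (d * qSeq k)⁆

/-- `w_{Ω,k}(x,y) = [x,y]^{Ω(k)+ε₁} v_k^{d^k n+1} [x,y]^{ε₂} v_k^{d^k n+2} ⋯ [x,y]^{ε_h} v_k^{d^k n+h}`,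
written as the ordered product over `j = 1, …, h` (index `i = j - 1`). -/
noncomputable def wWord (h d n : ℕ) (Ω : ℕ → ℕ) (k : ℕ) {G : Type*} [Group G] (x y : G) : G :=
  ((List.range h).map (fun i =>
    ⁅x, y⁆ ^ ((if i = 0 then (Ω k : ℤ) else 0) + epsSign (i + 1)) *
      vWord d k x y ^ (d ^ k * n + (i + 1)))).prod

/-! If `x ^ q_k = 1` then `x ^ (d q_k) = 1`, so `v_k(x, y) = 1` and `w_{Ω,k}(x, y)` collapses to
`[x, y] ^ (Ω(k) + ε₁ + ⋯ + ε_h)`. Each block of ten signs sums to `0`, so the identity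
`w_{Ω,k} ≡ 1` reads `[x, y] ^ Ω(k) = [x, y] = 1`. -/

lemma prod_map_range_zpow {G : Type*} [Group G] (c : G) (f : ℕ → ℤ) (h : ℕ) :
    ((List.range h).map (fun i => c ^ f i)).prod = c ^ ∑ i ∈ Finset.range h, f i := by
  induction h with
  | zero => simp
  | succ m ih => simp [List.range_succ, Finset.sum_range_succ, ih, zpow_add]

lemma sum_range_epsSign_ten_mul (m : ℕ) : ∑ i ∈ Finset.range (10 * m), epsSign (i + 1) = 0 := by
  induction m with
  | zero => simp
  | succ m ih =>
    rw [show 10 * (m + 1) = 10 * m + 9 + 1 by ring]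
    simp only [Finset.sum_range_succ, ih]
    simp [epsSign, Nat.add_mod]

lemma sum_range_ite_zero_add_epsSign (a : ℤ) {h : ℕ} (hh : 0 < h) (h10 : h % 10 = 0) :
    ∑ i ∈ Finset.range h, ((if i = 0 then a else 0) + epsSign (i + 1)) = a := by
  obtain ⟨m, rfl⟩ : ∃ m, h = 10 * m := ⟨h / 10, by omega⟩
  rw [Finset.sum_add_distrib, sum_range_epsSign_ten_mul, Finset.sum_ite_eq',
    if_pos (Finset.mem_range.2 hh), add_zero]

section

variable {G : Type*} [Group G] {d k : ℕ} {x : G}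

lemma vWord_eq_one_of_pow_qSeq_eq_one (hx : x ^ qSeq k = 1) (y : G) : vWord d k x y = 1 := by
  rw [vWord, mul_comm, pow_mul, hx, one_pow, commutatorElement_one_right]

lemma wWord_eq_commutator_zpow_of_vWord_eq_one {h : ℕ} (n : ℕ) (Ω : ℕ → ℕ) {y : G} (hh : 0 < h)
    (h10 : h % 10 = 0) (hv : vWord d k x y = 1) : wWord h d n Ω k x y = ⁅x, y⁆ ^ (Ω k : ℤ) := by
  simp only [wWord, hv, one_pow, mul_one]
  rw [prod_map_range_zpow, sum_range_ite_zero_add_epsSign _ hh h10]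

end

theorem stmt3_general (h d n : ℕ) (hh : 0 < h) (h10 : h % 10 = 0)
    (Ω : ℕ → ℕ)
    (k : ℕ) (hΩk : Ω k = 1)
    (G : Type*) [Group G]
    (hid : ∀ x y : G, wWord h d n Ω k x y = 1) :
    ∀ x : G, x ^ qSeq k = 1 → ∀ y : G, ⁅x, y⁆ = 1 := by
  intro x hx y
  have hw := hid x y
  rwa [wWord_eq_commutator_zpow_of_vWord_eq_one n Ω hh h10
    (vWord_eq_one_of_pow_qSeq_eq_one hx y), hΩk, Nat.cast_one, zpow_one] at hw

/-- Let `h, d, n` be positive with `h ≡ 0 (mod 10)`, let `Ω` be a `{0,1}`-valued sequence and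
`k ≥ 1` with `Ω(k) = 1`. In any group satisfying the identity `w_{Ω,k} ≡ 1`, the quasiidentity
`x^{q_k} = 1 → [x,y] = 1` holds: every `x` with `x^{q_k} = 1` commutes with every element. -/
theorem stmt3 (h d n : ℕ) (hh : 0 < h) (hd : 0 < d) (hn : 0 < n) (h10 : h % 10 = 0)
    (Ω : ℕ → ℕ) (hΩ : ∀ j, 1 ≤ j → Ω j = 0 ∨ Ω j = 1)
    (k : ℕ) (hk : 1 ≤ k) (hΩk : Ω k = 1)
    (G : Type*) [Group G]
    (hid : ∀ x y : G, wWord h d n Ω k x y = 1) :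
    ∀ x : G, x ^ qSeq k = 1 → ∀ y : G, ⁅x, y⁆ = 1 :=
  stmt3_general h d n hh h10 Ω k hΩk G hid
end

section
/- Let h, d, n be positive integers with h ≡ 0 (mod 10), and let Ω₁, Ω₂ : {1,2,…} → {0,1} be sequences with Ω₁(k₀) ≠ Ω₂(k₀) for some k₀ ≥ 1. Then in the free group F of rank 2, the subgroup generated by all values w_{Ω₁,k}(X,Y) and w_{Ω₂,k}(X,Y), where k ≥ 1 and X, Y range over F, equals the commutator (derived) subgroup of F. -/
/-!
The words `w_{Ω₁,k}` and `w_{Ω₂,k}` differ only in the exponent of their leading `[x,y]`, so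
`w_{Ω₁,k₀}(x,y) w_{Ω₂,k₀}(x,y)⁻¹ = [x,y]^{±1}`. Hence every commutator lies in the verbal
subgroup, and conversely each `w_{Ω,k}(x,y)` is a product of commutators.
-/

open scoped commutatorElement

section Words

variable {G : Type*} [Group G]

lemma wWord_mem_commutator (h d n : ℕ) (Ω : ℕ → ℕ) (k : ℕ) (x y : G) :
    wWord h d n Ω k x y ∈ commutator G := by
  have hc : ⁅x, y⁆ ∈ commutator G :=
    Subgroup.commutator_mem_commutator (Subgroup.mem_top x) (Subgroup.mem_top y)
  have hv : vWord d k x y ∈ commutator G :=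
    Subgroup.commutator_mem_commutator (Subgroup.mem_top _) (Subgroup.mem_top _)
  refine list_prod_mem fun g hg => ?_
  obtain ⟨i, -, rfl⟩ := List.mem_map.mp hg
  exact mul_mem (zpow_mem hc _) (pow_mem hv _)

lemma wWord_eq_zpow_mul_wWord_zero {h : ℕ} (hh : 0 < h) (d n : ℕ) (Ω : ℕ → ℕ) (k : ℕ)
    (x y : G) :
    wWord h d n Ω k x y = ⁅x, y⁆ ^ (Ω k : ℤ) * wWord h d n 0 k x y := by
  obtain ⟨m, rfl⟩ := Nat.exists_eq_add_one_of_ne_zero hh.ne'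
  simp only [wWord, List.range_succ_eq_map, List.map_cons, List.prod_cons, List.map_map,
    Function.comp_def, if_pos, Nat.add_one_ne_zero, if_false, Pi.zero_apply, Nat.cast_zero,
    zpow_zero, one_mul, zero_add, zpow_add, mul_assoc]

lemma wWord_mul_inv_wWord {h : ℕ} (hh : 0 < h) (d n : ℕ) (Ω₁ Ω₂ : ℕ → ℕ) (k : ℕ) (x y : G) :
    wWord h d n Ω₁ k x y * (wWord h d n Ω₂ k x y)⁻¹ = ⁅x, y⁆ ^ ((Ω₁ k : ℤ) - Ω₂ k) := by
  rw [wWord_eq_zpow_mul_wWord_zero hh d n Ω₁, wWord_eq_zpow_mul_wWord_zero hh d n Ω₂,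
    mul_inv_rev, mul_assoc, mul_inv_cancel_left, ← zpow_neg, ← zpow_add, sub_eq_add_neg]

end Words

lemma Subgroup.mem_of_zpow_mem_of_isUnit {G : Type*} [Group G] {H : Subgroup G} {g : G}
    {e : ℤ} (he : IsUnit e) (hg : g ^ e ∈ H) : g ∈ H := by
  simpa only [← zpow_mul, Int.isUnit_mul_self he, zpow_one] using zpow_mem hg e

lemma isUnit_natCast_sub_natCast_of_ne {a b : ℕ} (ha : a = 0 ∨ a = 1) (hb : b = 0 ∨ b = 1)
    (hab : a ≠ b) : IsUnit ((a : ℤ) - b) := by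
  rw [Int.isUnit_iff]
  omega

theorem stmt10_general (h d n : ℕ) (hh : 0 < h)
    (Ω₁ Ω₂ : ℕ → ℕ)
    (hΩ₁ : ∀ k, 1 ≤ k → Ω₁ k = 0 ∨ Ω₁ k = 1)
    (hΩ₂ : ∀ k, 1 ≤ k → Ω₂ k = 0 ∨ Ω₂ k = 1)
    (k₀ : ℕ) (hk₀ : 1 ≤ k₀) (hne : Ω₁ k₀ ≠ Ω₂ k₀) :
    Subgroup.closure {g : FreeGroup (Fin 2) |
        ∃ k, 1 ≤ k ∧ ∃ X Y : FreeGroup (Fin 2),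
          g = wWord h d n Ω₁ k X Y ∨ g = wWord h d n Ω₂ k X Y} =
      commutator (FreeGroup (Fin 2)) := by
  refine le_antisymm ?_ ?_
  · rw [Subgroup.closure_le]
    rintro g ⟨k, -, X, Y, rfl | rfl⟩ <;> exact wWord_mem_commutator h d n _ k X Y
  · rw [commutator_def, Subgroup.commutator_le]
    intro x _ y _
    refine Subgroup.mem_of_zpow_mem_of_isUnit
      (isUnit_natCast_sub_natCast_of_ne (hΩ₁ k₀ hk₀) (hΩ₂ k₀ hk₀) hne) ?_
    rw [← wWord_mul_inv_wWord hh d n Ω₁ Ω₂ k₀ x y]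
    exact mul_mem (Subgroup.subset_closure ⟨k₀, hk₀, x, y, Or.inl rfl⟩)
      (inv_mem (Subgroup.subset_closure ⟨k₀, hk₀, x, y, Or.inr rfl⟩))

/-- Let `h, d, n` be positive with `h ≡ 0 (mod 10)` and let `Ω₁, Ω₂` be `{0,1}`-valued sequences
with `Ω₁(k₀) ≠ Ω₂(k₀)` for some `k₀ ≥ 1`. In the free group of rank 2, the subgroup generated by
all values `w_{Ω₁,k}(X,Y)` and `w_{Ω₂,k}(X,Y)` (`k ≥ 1`) equals the commutator subgroup. -/
theorem stmt10 (h d n : ℕ) (hh : 0 < h) (hd : 0 < d) (hn : 0 < n) (h10 : h % 10 = 0)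
    (Ω₁ Ω₂ : ℕ → ℕ)
    (hΩ₁ : ∀ k, 1 ≤ k → Ω₁ k = 0 ∨ Ω₁ k = 1)
    (hΩ₂ : ∀ k, 1 ≤ k → Ω₂ k = 0 ∨ Ω₂ k = 1)
    (k₀ : ℕ) (hk₀ : 1 ≤ k₀) (hne : Ω₁ k₀ ≠ Ω₂ k₀) :
    Subgroup.closure {g : FreeGroup (Fin 2) |
        ∃ k, 1 ≤ k ∧ ∃ X Y : FreeGroup (Fin 2),
          g = wWord h d n Ω₁ k X Y ∨ g = wWord h d n Ω₂ k X Y} =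
      commutator (FreeGroup (Fin 2)) :=
  stmt10_general h d n hh Ω₁ Ω₂ hΩ₁ hΩ₂ k₀ hk₀ hne
end
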